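/- Let U ⊆ {(x,t) ∈ ℝ² : x > 0} be open and let ξ, b, c : U → ℝ be smooth and positive, satisfying the warped Berger Ricci flow system: ∂ₜξ = ξ(2 b_ss/b + c_ss/c), ∂ₜb = b_ss + (c_s/c + b_s/b) b_s + 2u²/b − 4/b, ∂ₜc = c_ss + 2 b_s c_s/b − 2u³/b, where u := c/b, f_s := ξ⁻¹ ∂ₓ f, and ∂ₜ is taken at fixed x. Then c_s satisfies on U the evolution equation ∂ₜ(c_s) = Δ(c_s) − 2 c_s c_ss/c + b⁻²·( c_s(−6u² − 2 b_s²) + 8 b_s u³ ), where Δf := f_ss + (2 b_s/b + c_s/c) f_s. -/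

import Mathlib

/-- Spatial partial derivative `∂ₓ f` (at fixed `t`) of a function of `(x,t)`. -/
noncomputable def partialX (f : ℝ × ℝ → ℝ) (p : ℝ × ℝ) : ℝ :=
  deriv (fun y => f (y, p.2)) p.1

/-- Time partial derivative `∂ₜ f` (at fixed `x`) of a function of `(x,t)`. -/
noncomputable def partialT (f : ℝ × ℝ → ℝ) (p : ℝ × ℝ) : ℝ :=
  deriv (fun τ => f (p.1, τ)) p.2

/-- Arc-length derivative `f_s := ξ⁻¹ ∂ₓ f`. -/
noncomputable def derivS (ξ f : ℝ × ℝ → ℝ) (p : ℝ × ℝ) : ℝ :=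
  (ξ p)⁻¹ * partialX f p

/-- Laplacian `Δf := f_ss + (2 b_s/b + c_s/c) f_s` of a radial function along a
warped Berger metric with coefficients `ξ, b, c`. -/
noncomputable def lapS (ξ b c f : ℝ × ℝ → ℝ) (p : ℝ × ℝ) : ℝ :=
  derivS ξ (derivS ξ f) p
    + (2 * derivS ξ b p / b p + derivS ξ c p / c p) * derivS ξ f p

section Helpers

open Filter

variable {f g : ℝ × ℝ → ℝ} {p : ℝ × ℝ} {a : ℝ}

lemma sliceX_diff (hf : DifferentiableAt ℝ f p) :
    DifferentiableAt ℝ (fun y => f (y, p.2)) p.1 :=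
  hf.comp p.1 (differentiableAt_id.prodMk (differentiableAt_const p.2))

lemma sliceT_diff (hf : DifferentiableAt ℝ f p) :
    DifferentiableAt ℝ (fun τ => f (p.1, τ)) p.2 :=
  hf.comp p.2 ((differentiableAt_const p.1).prodMk differentiableAt_id)

lemma partialX_eq (hf : DifferentiableAt ℝ f p) :
    partialX f p = fderiv ℝ f p (1, 0) :=
  (hf.hasFDerivAt.comp_hasDerivAt p.1
    ((hasDerivAt_id' p.1).prodMk (hasDerivAt_const p.1 p.2))).deriv

lemma partialT_eq (hf : DifferentiableAt ℝ f p) :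
    partialT f p = fderiv ℝ f p (0, 1) :=
  (hf.hasFDerivAt.comp_hasDerivAt p.2
    ((hasDerivAt_const p.2 p.1).prodMk (hasDerivAt_id' p.2))).deriv

lemma partialX_congr (h : f =ᶠ[nhds p] g) : partialX f p = partialX g p := by
  apply Filter.EventuallyEq.deriv_eq
  exact h.comp_tendsto ((continuous_id.prodMk continuous_const).tendsto p.1)

lemma partialT_congr (h : f =ᶠ[nhds p] g) : partialT f p = partialT g p := by
  apply Filter.EventuallyEq.deriv_eq
  exact h.comp_tendsto ((continuous_const.prodMk continuous_id).tendsto p.2)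

lemma partialX_add (hf : DifferentiableAt ℝ f p) (hg : DifferentiableAt ℝ g p) :
    partialX (fun q => f q + g q) p = partialX f p + partialX g p :=
  deriv_add (sliceX_diff hf) (sliceX_diff hg)

lemma partialX_sub (hf : DifferentiableAt ℝ f p) (hg : DifferentiableAt ℝ g p) :
    partialX (fun q => f q - g q) p = partialX f p - partialX g p :=
  deriv_sub (sliceX_diff hf) (sliceX_diff hg)

lemma partialX_mul (hf : DifferentiableAt ℝ f p) (hg : DifferentiableAt ℝ g p) :
    partialX (fun q => f q * g q) p = partialX f p * g p + f p * partialX g p :=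
  deriv_mul (sliceX_diff hf) (sliceX_diff hg)

lemma partialX_const_mul (a : ℝ) (hf : DifferentiableAt ℝ f p) :
    partialX (fun q => a * f q) p = a * partialX f p :=
  deriv_const_mul a (sliceX_diff hf)

lemma partialX_div (hf : DifferentiableAt ℝ f p) (hg : DifferentiableAt ℝ g p)
    (hg0 : g p ≠ 0) :
    partialX (fun q => f q / g q) p
      = (partialX f p * g p - f p * partialX g p) / g p ^ 2 :=
  deriv_div (sliceX_diff hf) (sliceX_diff hg) hg0

lemma partialX_pow (n : ℕ) (hf : DifferentiableAt ℝ f p) :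
    partialX (fun q => f q ^ n) p = (n : ℝ) * f p ^ (n - 1) * partialX f p :=
  deriv_fun_pow (sliceX_diff hf) n

lemma partialT_mul (hf : DifferentiableAt ℝ f p) (hg : DifferentiableAt ℝ g p) :
    partialT (fun q => f q * g q) p = partialT f p * g p + f p * partialT g p :=
  deriv_mul (sliceT_diff hf) (sliceT_diff hg)

lemma partialT_inv (hf : DifferentiableAt ℝ f p) (hf0 : f p ≠ 0) :
    partialT (fun q => (f q)⁻¹) p = -partialT f p / f p ^ 2 :=
  deriv_inv'' (sliceT_diff hf) hf0

/- derivS versions of the calculus rules. -/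

variable {ξ : ℝ × ℝ → ℝ}

lemma derivS_add (hf : DifferentiableAt ℝ f p) (hg : DifferentiableAt ℝ g p) :
    derivS ξ (fun q => f q + g q) p = derivS ξ f p + derivS ξ g p := by
  unfold derivS; rw [partialX_add hf hg]; ring

lemma derivS_sub (hf : DifferentiableAt ℝ f p) (hg : DifferentiableAt ℝ g p) :
    derivS ξ (fun q => f q - g q) p = derivS ξ f p - derivS ξ g p := by
  unfold derivS; rw [partialX_sub hf hg]; ring

lemma derivS_mul (hf : DifferentiableAt ℝ f p) (hg : DifferentiableAt ℝ g p) :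
    derivS ξ (fun q => f q * g q) p = derivS ξ f p * g p + f p * derivS ξ g p := by
  unfold derivS; rw [partialX_mul hf hg]; ring

lemma derivS_const_mul (a : ℝ) (hf : DifferentiableAt ℝ f p) :
    derivS ξ (fun q => a * f q) p = a * derivS ξ f p := by
  unfold derivS; rw [partialX_const_mul a hf]; ring

lemma derivS_div (hf : DifferentiableAt ℝ f p) (hg : DifferentiableAt ℝ g p)
    (hg0 : g p ≠ 0) :
    derivS ξ (fun q => f q / g q) p
      = (derivS ξ f p * g p - f p * derivS ξ g p) / g p ^ 2 := by
  unfold derivS; rw [partialX_div hf hg hg0]; ring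

lemma derivS_pow (n : ℕ) (hf : DifferentiableAt ℝ f p) :
    derivS ξ (fun q => f q ^ n) p = (n : ℝ) * f p ^ (n - 1) * derivS ξ f p := by
  unfold derivS; rw [partialX_pow n hf]; ring

lemma derivS_eq (hf : DifferentiableAt ℝ f p) :
    derivS ξ f p = (ξ p)⁻¹ * fderiv ℝ f p (1, 0) := by
  rw [derivS, partialX_eq hf]

/-- Smoothness of `derivS ξ f` on an open set. -/
lemma derivS_contDiffOn {U : Set (ℝ × ℝ)} (hU : IsOpen U)
    (hξ : ContDiffOn ℝ (⊤ : ℕ∞) ξ U) (hξ0 : ∀ q ∈ U, ξ q ≠ 0)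
    (hf : ContDiffOn ℝ (⊤ : ℕ∞) f U) : ContDiffOn ℝ (⊤ : ℕ∞) (derivS ξ f) U := by
  have hD : ContDiffOn ℝ (⊤ : ℕ∞) (fun q => fderiv ℝ f q (1, 0)) U :=
    (hf.fderiv_of_isOpen hU (by simp)).clm_apply contDiffOn_const
  refine ((hξ.inv hξ0).mul hD).congr fun q hq => ?_
  exact derivS_eq ((hf.contDiffAt (hU.mem_nhds hq)).differentiableAt (by simp))

/-- Equality of mixed second partial derivatives for smooth functions. -/
lemma mixed_partial {U : Set (ℝ × ℝ)} (hU : IsOpen U)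
    (hf : ContDiffOn ℝ (⊤ : ℕ∞) f U) (hp : p ∈ U) :
    partialT (fun q => fderiv ℝ f q (1, 0)) p = partialX (partialT f) p := by
  have hmem : U ∈ nhds p := hU.mem_nhds hp
  have hg : ContDiffOn ℝ (⊤ : ℕ∞) (fderiv ℝ f) U := hf.fderiv_of_isOpen hU (by simp)
  have hgd : DifferentiableAt ℝ (fderiv ℝ f) p :=
    (hg.contDiffAt hmem).differentiableAt (by simp)
  have happ : ∀ v : ℝ × ℝ, HasFDerivAt (fun q => fderiv ℝ f q v)
      ((ContinuousLinearMap.apply ℝ ℝ v).comp (fderiv ℝ (fderiv ℝ f) p)) p :=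
    fun v => (ContinuousLinearMap.apply ℝ ℝ v).hasFDerivAt.comp p hgd.hasFDerivAt
  have hL : partialT (fun q => fderiv ℝ f q (1, 0)) p
      = fderiv ℝ (fderiv ℝ f) p (0, 1) (1, 0) := by
    rw [partialT_eq (happ (1, 0)).differentiableAt, (happ (1, 0)).fderiv]; rfl
  have hR : partialX (partialT f) p = fderiv ℝ (fderiv ℝ f) p (1, 0) (0, 1) := by
    have he : partialT f =ᶠ[nhds p] fun q => fderiv ℝ f q (0, 1) := by
      filter_upwards [hmem] with q hq
      exact partialT_eq ((hf.contDiffAt (hU.mem_nhds hq)).differentiableAt (by simp))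
    rw [partialX_congr he, partialX_eq (happ (0, 1)).differentiableAt,
      (happ (0, 1)).fderiv]; rfl
  have hsymm : fderiv ℝ (fderiv ℝ f) p (0, 1) (1, 0)
      = fderiv ℝ (fderiv ℝ f) p (1, 0) (0, 1) := by
    have hev : ∀ᶠ q in nhds p, HasFDerivAt f (fderiv ℝ f q) q := by
      filter_upwards [hmem] with q hq
      exact ((hf.contDiffAt (hU.mem_nhds hq)).differentiableAt (by simp)).hasFDerivAt
    exact second_derivative_symmetric_of_eventually hev hgd.hasFDerivAt _ _
  rw [hL, hR, hsymm]

lemma diffAt_div {f g : ℝ × ℝ → ℝ} {p : ℝ × ℝ} (hf : DifferentiableAt ℝ f p)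
    (hg : DifferentiableAt ℝ g p) (h0 : g p ≠ 0) :
    DifferentiableAt ℝ (fun q => f q / g q) p := by
  simp only [div_eq_mul_inv]
  exact hf.mul (hg.inv h0)

end Helpers

/-- Evolution equation of `c_s` along a warped Berger Ricci flow:
`∂ₜ c_s = Δ c_s − 2 c_s c_ss / c + b⁻²( c_s(−6u² − 2b_s²) + 8 b_s u³ )`
with `u := c/b`. -/
theorem stmt_7 (U : Set (ℝ × ℝ)) (hU : IsOpen U) (hUx : ∀ p ∈ U, 0 < p.1)
    (ξ b c : ℝ × ℝ → ℝ)
    (hξreg : ContDiffOn ℝ (⊤ : ℕ∞) ξ U) (hbreg : ContDiffOn ℝ (⊤ : ℕ∞) b U)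
    (hcreg : ContDiffOn ℝ (⊤ : ℕ∞) c U)
    (hξpos : ∀ p ∈ U, 0 < ξ p) (hbpos : ∀ p ∈ U, 0 < b p) (hcpos : ∀ p ∈ U, 0 < c p)
    (hflowξ : ∀ p ∈ U, partialT ξ p =
      ξ p * (2 * derivS ξ (derivS ξ b) p / b p + derivS ξ (derivS ξ c) p / c p))
    (hflowb : ∀ p ∈ U, partialT b p =
      derivS ξ (derivS ξ b) p
        + (derivS ξ c p / c p + derivS ξ b p / b p) * derivS ξ b p
        + 2 * (c p / b p) ^ 2 / b p - 4 / b p)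
    (hflowc : ∀ p ∈ U, partialT c p =
      derivS ξ (derivS ξ c) p + 2 * derivS ξ b p * derivS ξ c p / b p
        - 2 * (c p / b p) ^ 3 / b p) :
    ∀ p ∈ U, partialT (derivS ξ c) p =
      lapS ξ b c (derivS ξ c) p
        - 2 * derivS ξ c p * derivS ξ (derivS ξ c) p / c p
        + ((b p) ^ 2)⁻¹ *
          (derivS ξ c p * (-6 * (c p / b p) ^ 2 - 2 * (derivS ξ b p) ^ 2)
            + 8 * derivS ξ b p * (c p / b p) ^ 3) := by
  intro p hp
  have hmem : U ∈ nhds p := hU.mem_nhds hp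
  have hξ0 : ∀ q ∈ U, ξ q ≠ 0 := fun q hq => (hξpos q hq).ne'
  have hb0 : ∀ q ∈ U, b q ≠ 0 := fun q hq => (hbpos q hq).ne'
  have hc0 : ∀ q ∈ U, c q ≠ 0 := fun q hq => (hcpos q hq).ne'
  -- smoothness of the s-derivatives
  have hSb : ContDiffOn ℝ (⊤ : ℕ∞) (derivS ξ b) U := derivS_contDiffOn hU hξreg hξ0 hbreg
  have hSc : ContDiffOn ℝ (⊤ : ℕ∞) (derivS ξ c) U := derivS_contDiffOn hU hξreg hξ0 hcreg
  have hSSc : ContDiffOn ℝ (⊤ : ℕ∞) (derivS ξ (derivS ξ c)) U :=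
    derivS_contDiffOn hU hξreg hξ0 hSc
  -- differentiability at p
  have dAt : ∀ {h : ℝ × ℝ → ℝ}, ContDiffOn ℝ (⊤ : ℕ∞) h U → DifferentiableAt ℝ h p :=
    fun {h} hh => (hh.contDiffAt hmem).differentiableAt (by simp)
  have dξ := dAt hξreg
  have db := dAt hbreg
  have dc := dAt hcreg
  have dSb := dAt hSb
  have dSc := dAt hSc
  have dSSc := dAt hSSc
  -- the flow right-hand side for c
  set F : ℝ × ℝ → ℝ := fun q =>
    derivS ξ (derivS ξ c) q + 2 * derivS ξ b q * derivS ξ c q / b q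
      - 2 * (c q / b q) ^ 3 / b q with hFdef
  -- step 1: rewrite derivS ξ c near p using the fderiv formula
  have hDc : DifferentiableAt ℝ (fun q => fderiv ℝ c q (1, 0)) p :=
    dAt ((hcreg.fderiv_of_isOpen hU (by simp)).clm_apply contDiffOn_const)
  have hinv : DifferentiableAt ℝ (fun q => (ξ q)⁻¹) p := dξ.inv (hξ0 p hp)
  have hEq1 : derivS ξ c =ᶠ[nhds p] fun q => (ξ q)⁻¹ * fderiv ℝ c q (1, 0) := by
    filter_upwards [hmem] with q hq
    exact derivS_eq ((hcreg.contDiffAt (hU.mem_nhds hq)).differentiableAt (by simp))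
  have e1 : partialT (derivS ξ c) p
      = partialT (fun q => (ξ q)⁻¹ * fderiv ℝ c q (1, 0)) p := partialT_congr hEq1
  have e2 : partialT (fun q => (ξ q)⁻¹ * fderiv ℝ c q (1, 0)) p
      = partialT (fun q => (ξ q)⁻¹) p * fderiv ℝ c p (1, 0)
        + (ξ p)⁻¹ * partialT (fun q => fderiv ℝ c q (1, 0)) p :=
    partialT_mul hinv hDc
  have e3 : partialT (fun q => (ξ q)⁻¹) p = -partialT ξ p / ξ p ^ 2 :=
    partialT_inv dξ (hξ0 p hp)
  have e4 : partialT (fun q => fderiv ℝ c q (1, 0)) p = partialX (partialT c) p :=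
    mixed_partial hU hcreg hp
  have e5 : partialX (partialT c) p = partialX F p :=
    partialX_congr (Filter.eventuallyEq_of_mem hmem hflowc)
  -- value of the fderiv in terms of derivS
  have hDcp : fderiv ℝ c p (1, 0) = ξ p * derivS ξ c p := by
    rw [derivS_eq dc, mul_inv_cancel_left₀ (hξ0 p hp)]
  -- compute derivS ξ F p
  have dq1 : DifferentiableAt ℝ (fun q => 2 * derivS ξ b q * derivS ξ c q) p :=
    ((differentiableAt_const 2).mul dSb).mul dSc
  have dq2 : DifferentiableAt ℝ (fun q => c q / b q) p := diffAt_div dc db (hb0 p hp)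
  have dpow : DifferentiableAt ℝ (fun q => (c q / b q) ^ 3) p := dq2.pow 3
  have dq3 : DifferentiableAt ℝ (fun q => 2 * (c q / b q) ^ 3) p :=
    (differentiableAt_const 2).mul dpow
  have dA : DifferentiableAt ℝ
      (fun q => derivS ξ (derivS ξ c) q + 2 * derivS ξ b q * derivS ξ c q / b q) p :=
    dSSc.add (diffAt_div dq1 db (hb0 p hp))
  have dB : DifferentiableAt ℝ (fun q => 2 * (c q / b q) ^ 3 / b q) p :=
    diffAt_div dq3 db (hb0 p hp)
  have hDF : derivS ξ F p =
      derivS ξ (derivS ξ (derivS ξ c)) p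
        + 2 * derivS ξ (derivS ξ b) p * derivS ξ c p / b p
        + 2 * derivS ξ b p * derivS ξ (derivS ξ c) p / b p
        - 2 * derivS ξ b p ^ 2 * derivS ξ c p / b p ^ 2
        - 6 * c p ^ 2 * derivS ξ c p / b p ^ 4
        + 8 * c p ^ 3 * derivS ξ b p / b p ^ 5 := by
    rw [hFdef]
    rw [derivS_sub dA dB, derivS_add dSSc (diffAt_div dq1 db (hb0 p hp)),
      derivS_div dq1 db (hb0 p hp), derivS_div dq3 db (hb0 p hp),
      derivS_mul (f := fun q => 2 * derivS ξ b q) ((differentiableAt_const 2).mul dSb) dSc,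
      derivS_const_mul 2 dSb,
      derivS_const_mul 2 dpow, derivS_pow 3 dq2,
      derivS_div dc db (hb0 p hp)]
    have hb' : b p ≠ 0 := hb0 p hp
    simp only [div_pow]
    field_simp
    ring
  -- now assemble
  rw [e1, e2, e3, e4, e5, hDcp, hflowξ p hp]
  have hFfinal : (ξ p)⁻¹ * partialX F p = derivS ξ F p := rfl
  rw [hFfinal, hDF]
  simp only [lapS]
  have hξ' : ξ p ≠ 0 := hξ0 p hp
  have hb' : b p ≠ 0 := hb0 p hp
  have hc' : c p ≠ 0 := hc0 p hp
  field_simp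
  ring
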